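/- arXiv:2111.10315 — 2 statements merged into one kernel-verified Lean document; each statement's English description precedes it below -/
import Mathlib

section
/- The laxator is natural: for convex relations Q ⊆ X×X' and R ⊆ Y×Y' and concave functions S: X → [-∞,∞], T: Y → [-∞,∞], one has (Q×R)_*(S+T) = Q_*S + R_*T as functions on X'×Y'. -/
/-- Convex combination on the extended reals: `cE l x y = l*x + (1-l)*y`,
using mathlib's `EReal` arithmetic (so that `⊥` dominates: `⊤ + ⊥ = ⊥`). -/
noncomputable def cE (l : ℝ) (x y : EReal) : EReal :=
  (l : EReal) * x + ((1 - l : ℝ) : EReal) * y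

/-- An (abstract) convex space: a set with binary convex-combination operations
`c l` for `l ∈ [0,1]` satisfying the four convex space axioms. (The value of
`c l` for `l` outside `[0,1]` is irrelevant.) -/
structure ConvexSpace (X : Type*) where
  c : ℝ → X → X → X
  one : ∀ x y, c 1 x y = x
  idem : ∀ l, 0 ≤ l → l ≤ 1 → ∀ x, c l x x = x
  comm : ∀ l, 0 ≤ l → l ≤ 1 → ∀ x y, c l x y = c (1 - l) y x
  assoc : ∀ l m l' m' : ℝ, 0 ≤ l → l ≤ 1 → 0 ≤ m → m ≤ 1 → 0 ≤ l' → l' ≤ 1 →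
    0 ≤ m' → m' ≤ 1 → l * m = l' → 1 - l = (1 - l') * (1 - m') →
    ∀ x y z, c l (c m x y) z = c l' x (c m' y z)

/-- A convex relation from `X` to `Y`: a convex subspace of the product `X × Y`. -/
def IsConvexRel {X Y : Type*} (V : ConvexSpace X) (W : ConvexSpace Y)
    (R : Set (X × Y)) : Prop :=
  ∀ l : ℝ, 0 ≤ l → l ≤ 1 → ∀ p ∈ R, ∀ q ∈ R,
    (V.c l p.1 q.1, W.c l p.2 q.2) ∈ R

/-- A concave extended-real-valued function on a convex space. -/
def IsConcaveFn {X : Type*} (V : ConvexSpace X) (S : X → EReal) : Prop :=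
  ∀ l : ℝ, 0 ≤ l → l ≤ 1 → ∀ x x', cE l (S x) (S x') ≤ S (V.c l x x')

/-- Pushforward of `S : X → EReal` along a relation `R ⊆ X × Y`:
`(push R S) y = sup { S x | (x,y) ∈ R }`, with `sup ∅ = ⊥`. -/
noncomputable def push {X Y : Type*} (R : Set (X × Y)) (S : X → EReal) (y : Y) : EReal :=
  sSup (S '' {x | (x, y) ∈ R})

/-- Composite of relations. -/
def relComp {X Y Z : Type*} (R : Set (X × Y)) (R' : Set (Y × Z)) : Set (X × Z) :=
  {p | ∃ y, (p.1, y) ∈ R ∧ (y, p.2) ∈ R'}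

/-- The product convex space, with componentwise operations. -/
def ConvexSpace.prod {X Y : Type*} (V : ConvexSpace X) (W : ConvexSpace Y) :
    ConvexSpace (X × Y) where
  c l p q := (V.c l p.1 q.1, W.c l p.2 q.2)
  one x y := by simp [V.one, W.one]
  idem l h0 h1 x := by simp [V.idem l h0 h1, W.idem l h0 h1]
  comm l h0 h1 x y := by simp [V.comm l h0 h1, W.comm l h0 h1]
  assoc l m l' m' a b c d e f g h i j x y z := by
    simp [V.assoc l m l' m' a b c d e f g h i j, W.assoc l m l' m' a b c d e f g h i j]

/-- naturality of the laxator: pushing `S + T` forward along the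
product relation `Q × R` gives `Q_*S + R_*T`. -/
theorem laxator_natural {X X' Y Y' : Type*}
    (VX : ConvexSpace X) (VX' : ConvexSpace X') (VY : ConvexSpace Y) (VY' : ConvexSpace Y')
    (Q : Set (X × X')) (R : Set (Y × Y'))
    (hQ : IsConvexRel VX VX' Q) (hR : IsConvexRel VY VY' R)
    (S : X → EReal) (T : Y → EReal)
    (hS : IsConcaveFn VX S) (hT : IsConcaveFn VY T) :
    push {p : (X × Y) × (X' × Y') | (p.1.1, p.2.1) ∈ Q ∧ (p.1.2, p.2.2) ∈ R}
        (fun p => S p.1 + T p.2)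
      = fun p : X' × Y' => push Q S p.1 + push R T p.2 := by
  funext p
  unfold push
  apply le_antisymm
  · apply sSup_le
    rintro e ⟨⟨x, y⟩, ⟨hx, hy⟩, rfl⟩
    exact add_le_add (le_sSup ⟨x, hx, rfl⟩) (le_sSup ⟨y, hy, rfl⟩)
  · apply EReal.add_le_of_forall_lt
    intro a ha b hb
    obtain ⟨_, ⟨x, hx, rfl⟩, hax⟩ := lt_sSup_iff.mp ha
    obtain ⟨_, ⟨y, hy, rfl⟩, hby⟩ := lt_sSup_iff.mp hb
    exact le_trans (add_le_add hax.le hby.le) (le_sSup ⟨(x, y), ⟨hx, hy⟩, rfl⟩)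
end

section
/- The Boltzmann distribution maximizes the free entropy: for any H: {0,…,n} → ℝ and β ∈ ℝ, the function p ↦ S_Sh(p) − β·Σᵢ Hᵢpᵢ on the simplex Δⁿ attains its supremum at pᵢ = exp(−βHᵢ)/Σⱼ exp(−βHⱼ), and the supremum equals log Σⱼ exp(−βHⱼ). -/
open Real

lemma aux_gibbs (a b : ℝ) (ha : 0 ≤ a) (hb : 0 < b) : a * log (b / a) ≤ b - a := by
  rcases eq_or_lt_of_le ha with h | h
  · simp [← h, hb.le]
  · have hba : 0 < b / a := div_pos hb h
    have := Real.log_le_sub_one_of_pos hba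
    have h2 : a * log (b / a) ≤ a * (b / a - 1) := by
      exact mul_le_mul_of_nonneg_left this ha
    calc a * log (b / a) ≤ a * (b / a - 1) := h2
      _ = b - a := by field_simp

/-- the Boltzmann distribution `pᵢ = exp(−βHᵢ)/Σⱼ exp(−βHⱼ)`
maximizes the free entropy `S_Sh(p) − β Σᵢ Hᵢ pᵢ` over the simplex, and the
maximum value is `log Σⱼ exp(−βHⱼ)`. -/
theorem boltzmann_maximizes (n : ℕ) (H : Fin (n + 1) → ℝ) (β : ℝ) :
    IsGreatest
      {s : ℝ | ∃ p : Fin (n + 1) → ℝ, (∀ i, 0 ≤ p i) ∧ (∑ i, p i = 1) ∧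
        s = (-∑ i, p i * log (p i)) - β * ∑ i, H i * p i}
      (log (∑ j, exp (-β * H j))) ∧
    (-∑ i, (exp (-β * H i) / ∑ j, exp (-β * H j)) *
        log (exp (-β * H i) / ∑ j, exp (-β * H j))) -
      β * ∑ i, H i * (exp (-β * H i) / ∑ j, exp (-β * H j)) =
      log (∑ j, exp (-β * H j)) := by
  set Z : ℝ := ∑ j, exp (-β * H j) with hZdef
  have hZpos : 0 < Z := Finset.sum_pos (fun j _ => exp_pos _) ⟨0, Finset.mem_univ 0⟩
  have hsumq : ∑ i, exp (-β * H i) / Z = 1 := by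
    rw [← Finset.sum_div, ← hZdef, div_self hZpos.ne']
  -- value at the Boltzmann distribution
  have hval : (-∑ i, (exp (-β * H i) / Z) * log (exp (-β * H i) / Z)) -
      β * ∑ i, H i * (exp (-β * H i) / Z) = log Z := by
    have hlog : ∀ i : Fin (n + 1), log (exp (-β * H i) / Z) = -β * H i - log Z := by
      intro i
      rw [Real.log_div (exp_ne_zero _) hZpos.ne', Real.log_exp]
    calc (-∑ i, (exp (-β * H i) / Z) * log (exp (-β * H i) / Z)) -
          β * ∑ i, H i * (exp (-β * H i) / Z)
        = (-∑ i, ((exp (-β * H i) / Z) * (-β * H i) - (exp (-β * H i) / Z) * log Z)) -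
          β * ∑ i, H i * (exp (-β * H i) / Z) := by
          congr 2
          refine Finset.sum_congr rfl fun i _ => ?_
          rw [hlog i]; ring
      _ = (-(∑ i, (exp (-β * H i) / Z) * (-β * H i)) + (∑ i, exp (-β * H i) / Z) * log Z) -
          β * ∑ i, H i * (exp (-β * H i) / Z) := by
          rw [Finset.sum_sub_distrib, Finset.sum_mul]; ring
      _ = log Z := by
          rw [hsumq, one_mul]
          have : ∑ i, (exp (-β * H i) / Z) * (-β * H i)
              = -β * ∑ i, H i * (exp (-β * H i) / Z) := by
            rw [Finset.mul_sum]
            exact Finset.sum_congr rfl fun i _ => by ring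
          rw [this]; ring
  refine ⟨⟨⟨fun i => exp (-β * H i) / Z, fun i => le_of_lt (div_pos (exp_pos _) hZpos),
      hsumq, hval.symm⟩, ?_⟩, hval⟩
  -- upper bound
  rintro s ⟨p, hp0, hp1, rfl⟩
  have hterm : ∀ i : Fin (n + 1), -(p i * log (p i)) - β * (H i * p i) ≤
      (exp (-β * H i) / Z - p i) + p i * log Z := by
    intro i
    rcases eq_or_lt_of_le (hp0 i) with h0 | h0
    · simp [← h0]
      positivity
    · have hq : 0 < exp (-β * H i) / Z := div_pos (exp_pos _) hZpos
      have hgibbs := aux_gibbs (p i) (exp (-β * H i) / Z) (hp0 i) hq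
      have hid : p i * log ((exp (-β * H i) / Z) / p i)
          = -(p i * log (p i)) - β * (H i * p i) - p i * log Z := by
        rw [Real.log_div hq.ne' h0.ne', Real.log_div (exp_ne_zero _) hZpos.ne',
          Real.log_exp]
        ring
      linarith [hid ▸ hgibbs]
  calc (-∑ i, p i * log (p i)) - β * ∑ i, H i * p i
      = ∑ i, (-(p i * log (p i)) - β * (H i * p i)) := by
        rw [Finset.sum_sub_distrib, ← Finset.sum_neg_distrib, Finset.mul_sum]
    _ ≤ ∑ i, ((exp (-β * H i) / Z - p i) + p i * log Z) :=
        Finset.sum_le_sum fun i _ => hterm i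
    _ = log Z := by
        rw [Finset.sum_add_distrib, Finset.sum_sub_distrib, ← Finset.sum_mul,
          hsumq, hp1, one_mul]; ring
end
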